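/- Let L̃_N ⊆ H(ℤ_N^g) be the image under the quotient map H(ℤ^g) → H(ℤ_N^g) of the subgroup {(0,q,k) : q ∈ ℤ^g, k ∈ ℤ}, and let χ : L̃_N → ℂ be the character induced by (0,q,k) ↦ e^{kπi/N} (this is well defined on the quotient). Let H_{N,g}(L) be the quotient of the group algebra ℂ[H(ℤ_N^g)] by the linear subspace spanned by the elements χ(u₁)·u − u·u₁ for u ∈ H(ℤ_N^g) and u₁ ∈ L̃_N, let π_L : ℂ[H(ℤ_N^g)] → H_{N,g}(L) be the quotient map, and equip H_{N,g}(L) with the action of H(ℤ_N^g) induced by left multiplication. Then the ℂ-linear map V → H_{N,g}(L) determined by e_μ ↦ π_L[class of (μ,0,0)] (using any lift of μ ∈ (ℤ_N)^g to ℤ^g; the class is independent of the lift) is a well-defined ℂ-linear isomorphism which is H(ℤ_N^g)-equivariant: it intertwines the Schrödinger representation u ↦ σ̄(u) on V with the left regular action on H_{N,g}(L). Its inverse is given by π_L[class of (p,q,k)] ↦ e^{(k−pᵀq)πi/N} e_{p mod N}. -/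

import Mathlib

open Finset

/-- The underlying `ℤ^g × ℤ^g` of the Heisenberg group. -/
abbrev HVec (g : ℕ) := (Fin g → ℤ) × (Fin g → ℤ)

/-- The standard symplectic form `ω((p,q),(p',q')) = Σⱼ (pⱼ q'ⱼ − qⱼ p'ⱼ)`. -/
def symp (g : ℕ) (x y : HVec g) : ℤ := ∑ j, (x.1 j * y.2 j - x.2 j * y.1 j)

lemma symp_add_left (g : ℕ) (x y z : HVec g) :
    symp g (x + y) z = symp g x z + symp g y z := by
  simp only [symp, Prod.fst_add, Prod.snd_add, Pi.add_apply]
  rw [← Finset.sum_add_distrib]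
  exact Finset.sum_congr rfl fun j _ => by ring

lemma symp_add_right (g : ℕ) (x y z : HVec g) :
    symp g x (y + z) = symp g x y + symp g x z := by
  simp only [symp, Prod.fst_add, Prod.snd_add, Pi.add_apply]
  rw [← Finset.sum_add_distrib]
  exact Finset.sum_congr rfl fun j _ => by ring

lemma symp_zero_left (g : ℕ) (y : HVec g) : symp g 0 y = 0 := by
  simp [symp]

lemma symp_zero_right (g : ℕ) (x : HVec g) : symp g x 0 = 0 := by
  simp [symp]

lemma symp_neg_left (g : ℕ) (x y : HVec g) : symp g (-x) y = - symp g x y := by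
  simp only [symp, Prod.fst_neg, Prod.snd_neg, Pi.neg_apply, ← Finset.sum_neg_distrib]
  exact Finset.sum_congr rfl fun j _ => by ring

lemma symp_neg_right (g : ℕ) (x y : HVec g) : symp g x (-y) = - symp g x y := by
  simp only [symp, Prod.fst_neg, Prod.snd_neg, Pi.neg_apply, ← Finset.sum_neg_distrib]
  exact Finset.sum_congr rfl fun j _ => by ring

lemma symp_self (g : ℕ) (x : HVec g) : symp g x x = 0 :=
  Finset.sum_eq_zero fun j _ => by ring

lemma symp_skew (g : ℕ) (x y : HVec g) : symp g x y = - symp g y x := by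
  simp only [symp, ← Finset.sum_neg_distrib]
  exact Finset.sum_congr rfl fun j _ => by ring

lemma symp_smul_left (g : ℕ) (c : ℤ) (x y : HVec g) :
    symp g (c • x) y = c * symp g x y := by
  simp only [symp, Prod.smul_fst, Prod.smul_snd, Pi.smul_apply, smul_eq_mul, Finset.mul_sum]
  exact Finset.sum_congr rfl fun j _ => by ring

lemma symp_smul_right (g : ℕ) (c : ℤ) (x y : HVec g) :
    symp g x (c • y) = c * symp g x y := by
  simp only [symp, Prod.smul_fst, Prod.smul_snd, Pi.smul_apply, smul_eq_mul, Finset.mul_sum]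
  exact Finset.sum_congr rfl fun j _ => by ring

/-- The integral Heisenberg group `H(ℤ^g) = ℤ^g × ℤ^g × ℤ`. -/
def Heis (g : ℕ) := HVec g × ℤ

namespace Heis

variable {g : ℕ}

instance : Mul (Heis g) := ⟨fun a b => (a.1 + b.1, a.2 + b.2 + symp g a.1 b.1)⟩
instance : One (Heis g) := ⟨((0 : HVec g), (0 : ℤ))⟩
instance : Inv (Heis g) := ⟨fun a => (-a.1, -a.2)⟩

lemma mul_def (a b : Heis g) : a * b = (a.1 + b.1, a.2 + b.2 + symp g a.1 b.1) := rfl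
lemma one_def : (1 : Heis g) = ((0 : HVec g), (0 : ℤ)) := rfl
lemma inv_def (a : Heis g) : a⁻¹ = (-a.1, -a.2) := rfl

instance : Group (Heis g) where
  mul_assoc a b c := by
    refine Prod.ext (add_assoc a.1 b.1 c.1) ?_
    show (a.2 + b.2 + symp g a.1 b.1) + c.2 + symp g (a.1 + b.1) c.1
      = a.2 + (b.2 + c.2 + symp g b.1 c.1) + symp g a.1 (b.1 + c.1)
    rw [symp_add_left, symp_add_right]
    ring
  one_mul a := Prod.ext (zero_add a.1) (by
    show (0 : ℤ) + a.2 + symp g 0 a.1 = a.2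
    rw [symp_zero_left]; ring)
  mul_one a := Prod.ext (add_zero a.1) (by
    show a.2 + 0 + symp g a.1 0 = a.2
    rw [symp_zero_right]; ring)
  inv_mul_cancel a := Prod.ext (neg_add_cancel a.1) (by
    show -a.2 + a.2 + symp g (-a.1) a.1 = 0
    rw [symp_neg_left, symp_self]; ring)

end Heis

/-- The normal subgroup `Γ_N = {(Np, Nq, 2Nk)}` of `H(ℤ^g)`. -/
def GammaN (g N : ℕ) (hN : Even N) : Subgroup (Heis g) where
  carrier := {a | (∃ x : HVec g, a.1 = (N : ℤ) • x) ∧ ∃ k : ℤ, a.2 = 2 * N * k}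
  one_mem' := ⟨⟨0, by simp [Heis.one_def]⟩, 0, by simp [Heis.one_def]⟩
  mul_mem' := by
    rintro a b ⟨⟨x, hx⟩, k, hk⟩ ⟨⟨y, hy⟩, l, hl⟩
    obtain ⟨m, hm⟩ := hN
    have hNm : (N : ℤ) = m + m := by exact_mod_cast hm
    refine ⟨⟨x + y, ?_⟩, k + l + m * symp g x y, ?_⟩
    · simp [Heis.mul_def, hx, hy, smul_add]
    · simp only [Heis.mul_def, hx, hy, hk, hl, symp_smul_left, symp_smul_right]
      rw [hNm]; ring
  inv_mem' := by
    rintro a ⟨⟨x, hx⟩, k, hk⟩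
    exact ⟨⟨-x, by simp [Heis.inv_def, hx]⟩, -k, by simp [Heis.inv_def, hk]⟩

instance gammaN_normal (g N : ℕ) (hN : Even N) : (GammaN g N hN).Normal := by
  constructor
  intro n hn x
  obtain ⟨⟨y, hy⟩, k, hk⟩ := hn
  refine ⟨⟨y, ?_⟩, k + symp g x.1 y, ?_⟩
  · show x.1 + n.1 + -x.1 = (N : ℤ) • y
    rw [hy]; abel
  · show x.2 + n.2 + symp g x.1 n.1 + -x.2 + symp g (x.1 + n.1) (-x.1) = 2 * N * (k + symp g x.1 y)
    have h1 : symp g y x.1 = - symp g x.1 y := symp_skew g y x.1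
    rw [hy, hk, symp_add_left, symp_neg_right, symp_neg_right, symp_self, symp_smul_left,
      symp_smul_right, h1]; ring

noncomputable section

/-- The Hilbert space `V` of functions `(ℤ_N)^g → ℂ` with its standard inner product. -/
abbrev ThetaSp (g N : ℕ) [NeZero N] := EuclideanSpace ℂ (Fin g → ZMod N)

/-- The standard orthonormal basis `(e_μ)` of `V`, `μ ∈ (ℤ_N)^g`,
with `e_μ = EuclideanSpace.single μ 1`. -/
def thetaBasis (g N : ℕ) [NeZero N] : Module.Basis (Fin g → ZMod N) ℂ (ThetaSp g N) :=
  (EuclideanSpace.basisFun (Fin g → ZMod N) ℂ).toBasis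

/-- The coefficient `exp(−(πi/N) pᵀq − (2πi/N) μᵀq)`, where `μᵀq` is computed using the
canonical lift `ZMod.val` of `μ` to `ℤ^g`. -/
def schCoeff (g N : ℕ) [NeZero N] (p q : Fin g → ℤ) (μ : Fin g → ZMod N) : ℂ :=
  Complex.exp (-((Real.pi : ℂ) * Complex.I / N) * (∑ j, (p j : ℂ) * (q j : ℂ))
    - (2 * (Real.pi : ℂ) * Complex.I / N) * (∑ j, ((μ j).val : ℂ) * (q j : ℂ)))

/-- The operator `O_{pq}` on `V`, determined by its action on the standard basis:
`O_{pq} e_μ = exp(−(πi/N) pᵀq − (2πi/N) μᵀq) • e_{μ+p}`. -/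
def Opq (g N : ℕ) [NeZero N] (p q : Fin g → ℤ) : ThetaSp g N →L[ℂ] ThetaSp g N :=
  LinearMap.toContinuousLinearMap <|
    (thetaBasis g N).constr ℂ fun μ =>
      schCoeff g N p q μ • EuclideanSpace.single (μ + fun j => ((p j : ZMod N))) (1 : ℂ)

/-- The group algebra `ℂ[H(ℤ_N^g)]`. -/
abbrev HeisAlg (g N : ℕ) (hN : Even N) := MonoidAlgebra ℂ (Heis g ⧸ GammaN g N hN)

/-- The relations `χ(u₁)·u − u·u₁`, for `u ∈ H(ℤ_N^g)` and `u₁ ∈ L̃_N` (i.e. `u₁ = (0,q,k)`),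
where `χ(0,q,k) = e^{kπi/N}`. -/
def thetaRel (g N : ℕ) (hN : Even N) : Set (HeisAlg g N hN) :=
  {z | ∃ (x : Heis g) (q : Fin g → ℤ) (k : ℤ),
    z = Complex.exp ((k : ℂ) * (Real.pi : ℂ) * Complex.I / N) •
          MonoidAlgebra.single (QuotientGroup.mk x) (1 : ℂ)
        - MonoidAlgebra.single
            ((QuotientGroup.mk x : Heis g ⧸ GammaN g N hN) *
              (QuotientGroup.mk ((((0 : Fin g → ℤ), q), k) : Heis g) :
                Heis g ⧸ GammaN g N hN)) (1 : ℂ)}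

/-- The subspace of `ℂ[H(ℤ_N^g)]` spanned by the relations. -/
def thetaW (g N : ℕ) (hN : Even N) : Submodule ℂ (HeisAlg g N hN) :=
  Submodule.span ℂ (thetaRel g N hN)

/-- The model `H_{N,g}(L)` of the space of theta functions as a quotient of `ℂ[H(ℤ_N^g)]`. -/
abbrev HNgL (g N : ℕ) (hN : Even N) := HeisAlg g N hN ⧸ thetaW g N hN

/-- The linear map `V → H_{N,g}(L)` determined by `e_μ ↦ π_L[(μ,0,0)]`, using the canonical
lift `ZMod.val` of `μ` to `ℤ^g`. -/
noncomputable def thetaToH (g N : ℕ) [NeZero N] (hN : Even N) :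
    ThetaSp g N →ₗ[ℂ] HNgL g N hN :=
  (thetaBasis g N).constr ℂ fun μ =>
    (thetaW g N hN).mkQ (MonoidAlgebra.single
      (QuotientGroup.mk (((fun j => ((μ j).val : ℤ)), (0 : Fin g → ℤ)), (0 : ℤ))) (1 : ℂ))

/-!
Every class in `H_{N,g}(L)` is a multiple of a basis image: writing
`(p,q,k) = (p,0,0)·(0,q,k − pᵀq)` and applying the defining relation to `(0,q,k − pᵀq) ∈ L̃_N`
gives `π_L[(p,q,k)] = e^{(k−pᵀq)πi/N} π_L[(p mod N,0,0)]`. Conversely the phase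
`k − pᵀq` satisfies `phase(ab) = phase a + phase b − 2 q_aᵀp_b`, so
`(p,q,k) ↦ e^{(k−pᵀq)πi/N} e_{p mod N}` is invariant under `Γ_N` (here `N` even is needed) and
kills the relations; it therefore descends to a two-sided inverse on `H_{N,g}(L)`.
Equivariance is checked on basis vectors, where `σ̄(x) e_μ` is the image of `x·(μ,0,0)` under
that same formula.
-/

namespace Heis

variable {g : ℕ}

abbrev mk (p q : Fin g → ℤ) (k : ℤ) : Heis g := ((p, q), k)

def phase (x : Heis g) : ℤ := x.2 - ∑ j, x.1.1 j * x.1.2 j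

lemma phase_mul (a b : Heis g) :
    phase (a * b) = phase a + phase b - 2 * ∑ j, a.1.2 j * b.1.1 j := by
  have hsum : ∑ j, (a.1.1 j + b.1.1 j) * (a.1.2 j + b.1.2 j)
      = ∑ j, (a.1.1 j * a.1.2 j + b.1.1 j * b.1.2 j
          + (a.1.1 j * b.1.2 j - a.1.2 j * b.1.1 j) + 2 * (a.1.2 j * b.1.1 j)) :=
    sum_congr rfl fun _ _ => by ring
  simp only [phase, mul_def, symp, Prod.fst_add, Prod.snd_add, Pi.add_apply]
  rw [hsum, sum_add_distrib, sum_add_distrib, sum_add_distrib, ← mul_sum]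
  ring

lemma eq_mk_mul_mk (x : Heis g) : x = mk x.1.1 0 0 * mk 0 x.1.2 (phase x) := by
  rw [mul_def]
  refine Prod.ext (Prod.ext ?_ ?_) ?_ <;> simp [symp, phase]

end Heis

def expPiDiv (N : ℕ) (n : ℤ) : ℂ := Complex.exp ((n : ℂ) * (Real.pi : ℂ) * Complex.I / N)

lemma expPiDiv_add (N : ℕ) (a b : ℤ) : expPiDiv N (a + b) = expPiDiv N a * expPiDiv N b := by
  rw [expPiDiv, expPiDiv, expPiDiv, ← Complex.exp_add]
  push_cast
  ring_nf

@[simp]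
lemma expPiDiv_zero (N : ℕ) : expPiDiv N 0 = 1 := by
  simp [expPiDiv]

lemma expPiDiv_congr {N : ℕ} {a b : ℤ} (h : a ≡ b [ZMOD 2 * N]) :
    expPiDiv N a = expPiDiv N b := by
  rcases eq_or_ne N 0 with rfl | hN
  · rw [Nat.cast_zero, mul_zero, Int.modEq_zero_iff] at h
    rw [h]
  replace hN : (N : ℂ) ≠ 0 := Nat.cast_ne_zero.2 hN
  obtain ⟨t, ht⟩ := Int.modEq_iff_dvd.1 h
  have hb : (b : ℂ) = a + 2 * N * t := by rw [← sub_eq_iff_eq_add']; exact_mod_cast ht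
  rw [expPiDiv, expPiDiv, hb, Complex.exp_eq_exp_iff_exists_int]
  exact ⟨-t, by field_simp; push_cast; ring⟩

section Vectors

variable {g : ℕ}

def reduceMod (N : ℕ) (p : Fin g → ℤ) : Fin g → ZMod N := fun j => (p j : ZMod N)

def liftVal {N : ℕ} (μ : Fin g → ZMod N) : Fin g → ℤ := fun j => ((μ j).val : ℤ)

lemma reduceMod_liftVal {N : ℕ} [NeZero N] (μ : Fin g → ZMod N) :
    reduceMod N (liftVal μ) = μ :=
  funext fun j => by simp [reduceMod, liftVal]

lemma reduceMod_add (N : ℕ) (p p' : Fin g → ℤ) :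
    reduceMod N (p + p') = reduceMod N p + reduceMod N p' :=
  funext fun j => by simp [reduceMod]

end Vectors

section Quotient

variable {g N : ℕ} (hN : Even N)

lemma mk_mk_eq_of_reduceMod_eq {p p' : Fin g → ℤ} (h : reduceMod N p = reduceMod N p') :
    (QuotientGroup.mk (Heis.mk p 0 0) : Heis g ⧸ GammaN g N hN)
      = QuotientGroup.mk (Heis.mk p' 0 0) := by
  have hdvd : ∀ j, (N : ℤ) ∣ p' j - p j := fun j =>
    (ZMod.intCast_eq_intCast_iff_dvd_sub _ _ _).1 (congr_fun h j)
  rw [QuotientGroup.eq, Heis.mul_def, Heis.inv_def]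
  refine ⟨⟨(fun j => (p' j - p j) / N, 0), ?_⟩, 0, ?_⟩
  · refine Prod.ext (funext fun j => ?_) (funext fun j => ?_)
    · simp [Int.mul_ediv_cancel' (hdvd j), neg_add_eq_sub]
    · simp
  · simp [symp]

lemma mkQ_single_mul_mk_zero (x : Heis g) (q : Fin g → ℤ) (k : ℤ) :
    (thetaW g N hN).mkQ (MonoidAlgebra.single
        ((QuotientGroup.mk x : Heis g ⧸ GammaN g N hN) * QuotientGroup.mk (Heis.mk 0 q k)) 1)
      = expPiDiv N k • (thetaW g N hN).mkQ (MonoidAlgebra.single (QuotientGroup.mk x) 1) := by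
  rw [← map_smul, eq_comm, ← sub_eq_zero, ← map_sub, Submodule.mkQ_apply,
    Submodule.Quotient.mk_eq_zero]
  exact Submodule.subset_span ⟨x, q, k, rfl⟩

end Quotient

section Inverse

variable {g N : ℕ} [NeZero N] (hN : Even N)

def thetaInvFun (g N : ℕ) [NeZero N] (x : Heis g) : ThetaSp g N :=
  expPiDiv N x.phase • EuclideanSpace.single (reduceMod N x.1.1) 1

lemma thetaInvFun_mul_of_mem {c : Heis g} (hc : c ∈ GammaN g N hN) (a : Heis g) :
    thetaInvFun g N (a * c) = thetaInvFun g N a := by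
  obtain ⟨⟨x, hx⟩, m, hm⟩ := hc
  -- `phase c = 2Nm − N² x.1ᵀx.2` is divisible by `2N` only because `N` is even.
  obtain ⟨r, hr⟩ := hN
  have hp : c.1.1 = (N : ℤ) • x.1 := congrArg Prod.fst hx
  have hq : c.1.2 = (N : ℤ) • x.2 := congrArg Prod.snd hx
  have hred : reduceMod N c.1.1 = 0 := funext fun j => by simp [reduceMod, hp]
  have hpp : ∑ j, c.1.1 j * c.1.2 j = N * N * ∑ j, x.1 j * x.2 j := by
    rw [hp, hq, mul_sum]
    exact sum_congr rfl fun j _ => by simp only [Pi.smul_apply, smul_eq_mul]; ring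
  have hqp : ∑ j, a.1.2 j * c.1.1 j = N * ∑ j, a.1.2 j * x.1 j := by
    rw [hp, mul_sum]
    exact sum_congr rfl fun j _ => by simp only [Pi.smul_apply, smul_eq_mul]; ring
  have hc : c.phase = 2 * N * m - N * N * ∑ j, x.1 j * x.2 j := by rw [← hpp, ← hm]; rfl
  have hphase : (a * c).phase ≡ a.phase [ZMOD 2 * N] := by
    refine Int.modEq_iff_dvd.2 ⟨r * ∑ j, x.1 j * x.2 j + ∑ j, a.1.2 j * x.1 j - m, ?_⟩
    rw [Heis.phase_mul, hc, hqp]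
    push_cast [hr]
    ring
  rw [thetaInvFun, thetaInvFun, expPiDiv_congr hphase, Heis.mul_def]
  simp only [Prod.fst_add, reduceMod_add, hred, add_zero]

lemma thetaInvFun_mul_mk_zero (a : Heis g) (q : Fin g → ℤ) (k : ℤ) :
    thetaInvFun g N (a * Heis.mk 0 q k) = expPiDiv N k • thetaInvFun g N a := by
  rw [thetaInvFun, thetaInvFun, smul_smul, ← expPiDiv_add, Heis.phase_mul, Heis.mul_def]
  simp [Heis.phase, add_comm]

def thetaInvAlg (g N : ℕ) [NeZero N] (hN : Even N) : HeisAlg g N hN →ₗ[ℂ] ThetaSp g N :=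
  (MonoidAlgebra.basis _ ℂ).constr ℂ <| Quotient.lift (thetaInvFun g N) fun a b hab =>
    (mul_inv_cancel_left a b ▸
      thetaInvFun_mul_of_mem hN (QuotientGroup.leftRel_apply.1 hab) a).symm

lemma thetaInvAlg_single (x : Heis g) (c : ℂ) :
    thetaInvAlg g N hN (MonoidAlgebra.single (QuotientGroup.mk x) c)
      = c • thetaInvFun g N x := by
  rw [← mul_one c, ← MonoidAlgebra.smul_single', map_smul, mul_one,
    ← MonoidAlgebra.basis_apply, thetaInvAlg, Module.Basis.constr_basis]
  rfl

lemma thetaW_le_ker_thetaInvAlg : thetaW g N hN ≤ LinearMap.ker (thetaInvAlg g N hN) := by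
  refine Submodule.span_le.2 ?_
  rintro _ ⟨x, q, k, rfl⟩
  change expPiDiv N k • MonoidAlgebra.single (QuotientGroup.mk x) 1
    - MonoidAlgebra.single (QuotientGroup.mk (x * Heis.mk 0 q k)) 1 ∈ LinearMap.ker _
  rw [LinearMap.mem_ker, map_sub, map_smul, thetaInvAlg_single, thetaInvAlg_single, one_smul,
    one_smul, thetaInvFun_mul_mk_zero, sub_self]

def thetaInv (g N : ℕ) [NeZero N] (hN : Even N) : HNgL g N hN →ₗ[ℂ] ThetaSp g N :=
  (thetaW g N hN).liftQ (thetaInvAlg g N hN) (thetaW_le_ker_thetaInvAlg hN)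

lemma thetaInv_mkQ_single (x : Heis g) (c : ℂ) :
    thetaInv g N hN ((thetaW g N hN).mkQ (MonoidAlgebra.single (QuotientGroup.mk x) c))
      = c • thetaInvFun g N x :=
  thetaInvAlg_single hN x c

end Inverse

section Forward

variable {g N : ℕ} [NeZero N] (hN : Even N)

lemma thetaBasis_apply (μ : Fin g → ZMod N) :
    thetaBasis g N μ = EuclideanSpace.single μ 1 := by
  rw [thetaBasis, OrthonormalBasis.coe_toBasis, EuclideanSpace.basisFun_apply]

lemma thetaToH_single (μ : Fin g → ZMod N) :
    thetaToH g N hN (EuclideanSpace.single μ 1)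
      = (thetaW g N hN).mkQ
          (MonoidAlgebra.single (QuotientGroup.mk (Heis.mk (liftVal μ) 0 0)) 1) := by
  rw [← thetaBasis_apply, thetaToH, Module.Basis.constr_basis]
  rfl

lemma Opq_single (p q : Fin g → ℤ) (μ : Fin g → ZMod N) :
    Opq g N p q (EuclideanSpace.single μ 1)
      = schCoeff g N p q μ • EuclideanSpace.single (μ + reduceMod N p) 1 := by
  rw [← thetaBasis_apply, Opq, LinearMap.coe_toContinuousLinearMap', Module.Basis.constr_basis]
  rfl

lemma thetaToH_thetaInvFun (x : Heis g) :
    thetaToH g N hN (thetaInvFun g N x)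
      = (thetaW g N hN).mkQ (MonoidAlgebra.single (QuotientGroup.mk x) 1) := by
  have hx : (QuotientGroup.mk x : Heis g ⧸ GammaN g N hN)
      = QuotientGroup.mk (Heis.mk (liftVal (reduceMod N x.1.1)) 0 0)
        * QuotientGroup.mk (Heis.mk 0 x.1.2 x.phase) := by
    rw [← mk_mk_eq_of_reduceMod_eq hN (reduceMod_liftVal _).symm, ← QuotientGroup.mk_mul,
      ← Heis.eq_mk_mul_mk]
  rw [hx, mkQ_single_mul_mk_zero, thetaInvFun, map_smul, thetaToH_single]

lemma expPiDiv_smul_Opq_single (x : Heis g) (μ : Fin g → ZMod N) :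
    expPiDiv N x.2 • Opq g N x.1.1 x.1.2 (EuclideanSpace.single μ 1)
      = thetaInvFun g N (x * Heis.mk (liftVal μ) 0 0) := by
  have hp : (x * Heis.mk (liftVal μ) 0 0).1.1 = x.1.1 + liftVal μ := rfl
  rw [Opq_single, smul_smul, thetaInvFun, hp, reduceMod_add, reduceMod_liftVal, add_comm μ,
    Heis.phase_mul]
  congr 1
  have hsum :
      ∑ j, (x.1.2 j : ℂ) * ((μ j).val : ℂ) = ∑ j, ((μ j).val : ℂ) * (x.1.2 j : ℂ) :=
    sum_congr rfl fun _ _ => mul_comm _ _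
  have hL : (Heis.mk (liftVal μ) 0 0 : Heis g).phase = 0 := by simp [Heis.phase]
  rw [hL, expPiDiv, expPiDiv, schCoeff, ← Complex.exp_add]
  congr 1
  simp only [Heis.phase, liftVal]
  push_cast
  rw [hsum]
  ring

end Forward

section Action

variable {g N : ℕ} (hN : Even N)

lemma thetaW_le_comap_mulLeft (z : Heis g ⧸ GammaN g N hN) :
    thetaW g N hN ≤ (thetaW g N hN).comap (LinearMap.mulLeft ℂ (MonoidAlgebra.single z 1)) := by
  refine QuotientGroup.induction_on z fun w => Submodule.span_le.2 ?_
  rintro _ ⟨x, q, k, rfl⟩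
  simp only [SetLike.mem_coe, Submodule.mem_comap, LinearMap.mulLeft_apply, mul_sub,
    mul_smul_comm, MonoidAlgebra.single_mul_single, one_mul, ← mul_assoc,
    ← QuotientGroup.mk_mul]
  exact Submodule.subset_span ⟨w * x, q, k, rfl⟩

def leftAct (g N : ℕ) (hN : Even N) (z : Heis g ⧸ GammaN g N hN) :
    HNgL g N hN →ₗ[ℂ] HNgL g N hN :=
  Submodule.mapQ _ _ (LinearMap.mulLeft ℂ (MonoidAlgebra.single z 1))
    (thetaW_le_comap_mulLeft hN z)

lemma leftAct_mkQ (z : Heis g ⧸ GammaN g N hN) (y : HeisAlg g N hN) :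
    leftAct g N hN z ((thetaW g N hN).mkQ y)
      = (thetaW g N hN).mkQ (MonoidAlgebra.single z 1 * y) :=
  rfl

end Action

section Isomorphism

variable {g N : ℕ} [NeZero N] (hN : Even N)

lemma thetaToH_comp_smul_Opq (x : Heis g) :
    thetaToH g N hN ∘ₗ (expPiDiv N x.2 • (Opq g N x.1.1 x.1.2 : ThetaSp g N →ₗ[ℂ] ThetaSp g N))
      = leftAct g N hN (QuotientGroup.mk x) ∘ₗ thetaToH g N hN := by
  refine (thetaBasis g N).ext fun μ => ?_
  simp only [LinearMap.comp_apply, LinearMap.smul_apply, ContinuousLinearMap.coe_coe,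
    thetaBasis_apply]
  rw [expPiDiv_smul_Opq_single, thetaToH_thetaInvFun, thetaToH_single, leftAct_mkQ,
    MonoidAlgebra.single_mul_single, one_mul, QuotientGroup.mk_mul]

lemma thetaInv_comp_thetaToH : thetaInv g N hN ∘ₗ thetaToH g N hN = LinearMap.id := by
  refine (thetaBasis g N).ext fun μ => ?_
  rw [LinearMap.comp_apply, thetaBasis_apply, thetaToH_single, thetaInv_mkQ_single, one_smul,
    thetaInvFun, LinearMap.id_apply]
  simp [Heis.phase, reduceMod_liftVal]

lemma thetaToH_comp_thetaInv : thetaToH g N hN ∘ₗ thetaInv g N hN = LinearMap.id := by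
  refine Submodule.linearMap_qext _ <| (MonoidAlgebra.basis _ ℂ).ext fun z => ?_
  refine QuotientGroup.induction_on z fun x => ?_
  simp only [LinearMap.comp_apply, MonoidAlgebra.basis_apply, thetaInv_mkQ_single, one_smul,
    thetaToH_thetaInvFun, LinearMap.id_apply]

end Isomorphism

/-- The map `e_μ ↦ π_L[(μ,0,0)]` is a `ℂ`-linear isomorphism from `V` to `H_{N,g}(L)`,
equivariant for the Schrödinger representation on `V` and the (well-defined) left regular
action of `H(ℤ_N^g)` on `H_{N,g}(L)`; its inverse sends
`π_L[(p,q,k)] ↦ e^{(k−pᵀq)πi/N} e_{p mod N}`. -/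
theorem stmt_5 (g N : ℕ) [NeZero N] (hN : Even N) :
    Function.Bijective (thetaToH g N hN) ∧
    (∃ act : (Heis g ⧸ GammaN g N hN) → (HNgL g N hN →ₗ[ℂ] HNgL g N hN),
      (∀ (x : Heis g) (y : HeisAlg g N hN),
        act (QuotientGroup.mk x) ((thetaW g N hN).mkQ y)
          = (thetaW g N hN).mkQ (MonoidAlgebra.single (QuotientGroup.mk x) (1 : ℂ) * y)) ∧
      (∀ (x : Heis g) (f : ThetaSp g N),
        thetaToH g N hN
            (Complex.exp ((x.2 : ℂ) * (Real.pi : ℂ) * Complex.I / N) • Opq g N x.1.1 x.1.2 f)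
          = act (QuotientGroup.mk x) (thetaToH g N hN f))) ∧
    ∃ inv : HNgL g N hN →ₗ[ℂ] ThetaSp g N,
      (∀ f : ThetaSp g N, inv (thetaToH g N hN f) = f) ∧
      (∀ y : HNgL g N hN, thetaToH g N hN (inv y) = y) ∧
      (∀ (p q : Fin g → ℤ) (k : ℤ),
        inv ((thetaW g N hN).mkQ (MonoidAlgebra.single (QuotientGroup.mk ((p, q), k)) (1 : ℂ)))
          = Complex.exp ((((k : ℂ) - ∑ j, (p j : ℂ) * (q j : ℂ))) * (Real.pi : ℂ) *
              Complex.I / N) •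
            EuclideanSpace.single (fun j => ((p j : ZMod N))) (1 : ℂ)) := by
  have hleft := LinearMap.congr_fun (thetaInv_comp_thetaToH (g := g) hN)
  have hright := LinearMap.congr_fun (thetaToH_comp_thetaInv (g := g) hN)
  refine ⟨Function.bijective_iff_has_inverse.2 ⟨thetaInv g N hN, hleft, hright⟩,
    ⟨leftAct g N hN, fun x y => leftAct_mkQ hN _ y,
      fun x f => LinearMap.congr_fun (thetaToH_comp_smul_Opq hN x) f⟩,
    thetaInv g N hN, hleft, hright, fun p q k => ?_⟩
  refine (thetaInv_mkQ_single hN (Heis.mk p q k) 1).trans ?_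
  rw [one_smul, thetaInvFun, expPiDiv, Heis.phase]
  push_cast
  rfl
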